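/- arXiv:2205.03610 — 10 statements merged into one kernel-verified Lean document; each statement's English description precedes it below -/
import Mathlib

section
/- Suppose there exists α₀ ∈ V with g(α₀) < 0. Then there exists a constant C > 0 such that for every α ∈ V, the distance from α to the feasible set satisfies dist(α, F_e) ≤ C · max(g(α), 0). -/
/-!
The constraint `g` is a convex quadratic. For `α` outside the feasible set, convexity puts the
point of the segment `[α₀, α]` at distance `g α / (g α - g α₀) · ‖α - α₀‖` from `α` into the
feasible set. Coercivity of the quadratic part gives `‖α - α₀‖ ≤ g α + K`, so this distance is
at most a constant multiple of `g α`.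
-/

open Metric Set RCLike

/-- `V L = ∏_{l=0}^{L} ℂ^{2l+1}` as a complex inner product space. -/
abbrev V (L : ℕ) := PiLp 2 (fun l : Fin (L + 1) => EuclideanSpace ℂ (Fin (2 * (l : ℕ) + 1)))

section ErrorBound

variable {E : Type*} [NormedAddCommGroup E] [NormedSpace ℝ E] {g : E → ℝ} {α₀ α : E}

theorem ConvexOn.exists_nonpos_dist_eq (hg : ConvexOn ℝ univ g) (hα₀ : g α₀ < 0)
    (hα : 0 ≤ g α) : ∃ β, g β ≤ 0 ∧ dist α β = g α / (g α - g α₀) * dist α α₀ := by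
  have hpos : 0 < g α - g α₀ := by linarith
  have ht : 1 - -g α₀ / (g α - g α₀) = g α / (g α - g α₀) := by field_simp; ring
  have ht₀ : 0 ≤ -g α₀ / (g α - g α₀) := div_nonneg (by linarith) hpos.le
  refine ⟨AffineMap.lineMap α₀ α (-g α₀ / (g α - g α₀)), ?_, ?_⟩
  · have hconv :=
      hg.2 (mem_univ α₀) (mem_univ α) (by rw [ht]; positivity) ht₀ (sub_add_cancel 1 _)
    rw [AffineMap.lineMap_apply_module]
    refine hconv.trans_eq ?_
    rw [ht, smul_eq_mul, smul_eq_mul]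
    field_simp
    ring
  · rw [dist_comm, dist_lineMap_right, ht, Real.norm_of_nonneg (by positivity), dist_comm]

theorem ConvexOn.infDist_sublevel_le (hg : ConvexOn ℝ univ g) (hα₀ : g α₀ < 0) {K : ℝ}
    (hK : ∀ α, dist α α₀ ≤ g α + K) (α : E) :
    infDist α {a | g a ≤ 0} ≤ (1 + K / -g α₀) * max (g α) 0 := by
  have hK₀ : 0 ≤ K := by linarith [hK α₀, dist_self α₀]
  have hδ : 0 < -g α₀ := neg_pos.2 hα₀
  rcases le_or_gt (g α) 0 with hα | hα
  · rw [infDist_zero_of_mem (show α ∈ {a | g a ≤ 0} from hα)]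
    positivity
  obtain ⟨β, hβ, hdist⟩ := hg.exists_nonpos_dist_eq hα₀ hα.le
  have hKδ : K / -g α₀ * g α * -g α₀ = K * g α := by
    rw [mul_right_comm, div_mul_cancel₀ _ hδ.ne']
  calc infDist α {a | g a ≤ 0} ≤ dist α β := infDist_le_dist_of_mem hβ
    _ ≤ g α / (g α - g α₀) * (g α + K) :=
      hdist ▸ mul_le_mul_of_nonneg_left (hK α) (div_nonneg hα.le (by linarith))
    _ ≤ (1 + K / -g α₀) * g α := by
      rw [div_mul_eq_mul_div, div_le_iff₀ (by linarith)]
      nlinarith [mul_nonneg (div_nonneg hK₀ hδ.le) (sq_nonneg (g α)), mul_pos hα hδ]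
    _ = (1 + K / -g α₀) * max (g α) 0 := by rw [max_eq_left hα.le]

end ErrorBound

theorem exists_dist_le_add_of_sq_le {E : Type*} [SeminormedAddCommGroup E] {f : E → ℝ}
    {μ b k : ℝ} (hμ : 0 < μ) (hf : ∀ x, μ * ‖x‖ ^ 2 - b * ‖x‖ + k ≤ f x) (x₀ : E) :
    ∃ K, ∀ x, dist x x₀ ≤ f x + K := by
  refine ⟨(b + 1) ^ 2 / (4 * μ) + ‖x₀‖ - k, fun x ↦ ?_⟩
  have hsq : μ * ‖x‖ ^ 2 - b * ‖x‖ + (b + 1) ^ 2 / (4 * μ) - ‖x‖ =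
      (2 * μ * ‖x‖ - (b + 1)) ^ 2 / (4 * μ) := by
    field_simp
    ring
  have : 0 ≤ (2 * μ * ‖x‖ - (b + 1)) ^ 2 / (4 * μ) := by positivity
  linarith [hf x, dist_eq_norm x x₀ ▸ norm_sub_le x x₀]

section Quadratic

variable {𝕜 E : Type*} [RCLike 𝕜] [NormedAddCommGroup E] [InnerProductSpace 𝕜 E]
  (T : E →ₗ[𝕜] E)

theorem re_inner_map_self_ofReal_smul (r : ℝ) (x : E) :
    re (inner 𝕜 ((r : 𝕜) • x) (T ((r : 𝕜) • x))) = r ^ 2 * re (inner 𝕜 x (T x)) := by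
  rw [map_smul, inner_smul_left, inner_smul_right, conj_ofReal, ← mul_assoc, ← ofReal_mul,
    re_ofReal_mul, sq]

theorem convexOn_re_inner_map_self [Module ℝ E] [IsScalarTower ℝ 𝕜 E]
    (hT : ∀ x, 0 ≤ re (inner 𝕜 x (T x))) : ConvexOn ℝ univ fun x ↦ re (inner 𝕜 x (T x)) := by
  refine ⟨convex_univ, fun x _ y _ a b ha hb hab ↦ ?_⟩
  have hxy := hT (x - y)
  simp only [smul_eq_mul, real_smul_eq_coe_smul (K := 𝕜), map_add, map_sub, map_smul,
    inner_add_left, inner_add_right, inner_sub_left, inner_sub_right, inner_smul_left,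
    inner_smul_right, conj_ofReal, re_ofReal_mul] at hxy ⊢
  obtain rfl : b = 1 - a := by linarith
  nlinarith [mul_nonneg ha hb]

theorem exists_pos_mul_norm_sq_le_re_inner_map_self [FiniteDimensional 𝕜 E]
    (hT : ∀ x ≠ 0, 0 < re (inner 𝕜 x (T x))) :
    ∃ μ, 0 < μ ∧ ∀ x, μ * ‖x‖ ^ 2 ≤ re (inner 𝕜 x (T x)) := by
  have := FiniteDimensional.proper_rclike 𝕜 E
  have hnormalize : ∀ x : E, x ≠ 0 → ((‖x‖⁻¹ : ℝ) : 𝕜) • x ∈ sphere (0 : E) 1 := fun x hx ↦ by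
    simp [norm_smul, norm_ne_zero_iff.2 hx]
  cases subsingleton_or_nontrivial E
  · exact ⟨1, one_pos, fun x ↦ by simp [Subsingleton.elim x 0]⟩
  obtain ⟨v, hv⟩ := exists_ne (0 : E)
  have hcont : Continuous fun x ↦ re (inner 𝕜 x (T x)) :=
    continuous_re.comp (continuous_id.inner T.continuous_of_finiteDimensional)
  obtain ⟨x₀, hx₀, hmin⟩ :=
    (isCompact_sphere (0 : E) 1).exists_isMinOn ⟨_, hnormalize v hv⟩ hcont.continuousOn
  refine ⟨_, hT x₀ (ne_zero_of_mem_unit_sphere ⟨x₀, hx₀⟩), fun x ↦ ?_⟩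
  rcases eq_or_ne x 0 with rfl | hx
  · simp
  have hle := isMinOn_iff.1 hmin _ (hnormalize x hx)
  rw [re_inner_map_self_ofReal_smul] at hle
  calc re (inner 𝕜 x₀ (T x₀)) * ‖x‖ ^ 2
      ≤ ‖x‖⁻¹ ^ 2 * re (inner 𝕜 x (T x)) * ‖x‖ ^ 2 := by gcongr
    _ = re (inner 𝕜 x (T x)) := by field_simp [norm_ne_zero_iff.2 hx]

end Quadratic

theorem stmt0_general (L : ℕ)
    (Yh : V L →ₗ[ℂ] V L)
    (hpd : ∀ α : V L, α ≠ 0 → 0 < (inner ℂ α (Yh α) : ℂ).re)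
    (αo : V L) (c ϱ : ℝ)
    (g : V L → ℝ)
    (hg : ∀ α : V L, g α = (inner ℂ α (Yh α) : ℂ).re - 2 * (inner ℂ αo α : ℂ).re + c - ϱ)
    (hslater : ∃ α₀ : V L, g α₀ < 0) :
    ∃ C : ℝ, 0 < C ∧ ∀ α : V L,
      Metric.infDist α {a : V L | g a ≤ 0} ≤ C * max (g α) 0 := by
  obtain ⟨α₀, hα₀⟩ := hslater
  have hquad : ConvexOn ℝ univ fun α : V L ↦ (inner ℂ α (Yh α)).re :=
    convexOn_re_inner_map_self Yh fun α ↦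
      (eq_or_ne α 0).elim (fun h ↦ by simp [h]) fun h ↦ (hpd α h).le
  have hlin := ((-2 : ℝ) • (reLm.comp ((innerₛₗ ℂ αo).restrictScalars ℝ))).convexOn convex_univ
  have hconvex : ConvexOn ℝ univ g := by
    refine ((hquad.add hlin).add_const (c - ϱ)).congr fun α _ ↦ ?_
    simp only [LinearMap.coe_smul, LinearMap.coe_comp, reLm_coe, LinearMap.coe_restrictScalars,
      coe_innerₛₗ_apply, Pi.add_apply, Pi.smul_apply, Function.comp_apply, re_to_complex,
      smul_eq_mul, hg]
    ring
  obtain ⟨μ, hμ, hcoercive⟩ := exists_pos_mul_norm_sq_le_re_inner_map_self Yh hpd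
  have hgrowth : ∀ α, μ * ‖α‖ ^ 2 - 2 * ‖αo‖ * ‖α‖ + (c - ϱ) ≤ g α := fun α ↦ by
    have hre : (inner ℂ αo α).re ≤ ‖αo‖ * ‖α‖ :=
      (Complex.re_le_norm _).trans (norm_inner_le_norm αo α)
    linarith [hg α, re_to_complex ▸ hcoercive α]
  obtain ⟨K, hK⟩ := exists_dist_le_add_of_sq_le hμ hgrowth α₀
  have hK₀ : 0 ≤ K := by linarith [hK α₀, dist_self α₀]
  have hδ : 0 < -g α₀ := neg_pos.2 hα₀
  exact ⟨1 + K / -g α₀, by positivity, hconvex.infDist_sublevel_le hα₀ hK⟩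

/-- if the feasible set has a Slater point, then there is `C > 0` such that
`dist(α, F_e) ≤ C · max(g α, 0)` for every `α`. -/
theorem stmt0 (L : ℕ)
    (Yh : V L →ₗ[ℂ] V L)
    (hsa : ∀ x y : V L, (inner ℂ (Yh x) y : ℂ) = inner ℂ x (Yh y))
    (hpd : ∀ α : V L, α ≠ 0 → 0 < (inner ℂ α (Yh α) : ℂ).re)
    (αo : V L) (c ϱ : ℝ)
    (g : V L → ℝ)
    (hg : ∀ α : V L, g α = (inner ℂ α (Yh α) : ℂ).re - 2 * (inner ℂ αo α : ℂ).re + c - ϱ)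
    (hslater : ∃ α₀ : V L, g α₀ < 0) :
    ∃ C : ℝ, 0 < C ∧ ∀ α : V L,
      Metric.infDist α {a : V L | g a ≤ 0} ≤ C * max (g α) 0 :=
  stmt0_general L Yh hpd αo c ϱ g hg hslater
end

section
/- Let α̃ ∈ V satisfy Ŷα̃ = α° and suppose g(α̃) < 0. Let C > 0 be a constant such that dist(α, F_e) ≤ C · max(g(α), 0) for all α ∈ V, set β̄ = max_{0 ≤ l ≤ L} β_l, let ε > 0, and let λ > 0 satisfy λ ≥ C · β̄^{1/p} · (ε · (L+1)^{p/2 − 1})^{−1/p} · Φ(α̃). Then for any global minimizer α* of F_λ on V and any point α_ε ∈ F_e with ‖α* − α_ε‖ = dist(α*, F_e), the point α_ε is an ε-minimizer of the constrained problem: Φ(α_ε) ≤ Φ(α) + ε for every α ∈ F_e. -/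
open Finset

namespace Real

theorem sum_rpow_le_card_rpow_mul_rpow_sum {ι : Type*} (s : Finset ι) {f : ι → ℝ}
    (hf : ∀ i ∈ s, 0 ≤ f i) {r : ℝ} (hr0 : 0 < r) (hr1 : r ≤ 1) :
    ∑ i ∈ s, f i ^ r ≤ (#s : ℝ) ^ (1 - r) * (∑ i ∈ s, f i) ^ r := by
  have hfr : ∀ i ∈ s, 0 ≤ f i ^ r := fun i hi => rpow_nonneg (hf i hi) r
  have hpow := rpow_sum_le_const_mul_sum_rpow_of_nonneg s (one_le_one_div hr0 hr1) hfr
  have hinv : ∀ i ∈ s, (f i ^ r) ^ (1 / r) = f i := fun i hi => by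
    rw [one_div, rpow_rpow_inv (hf i hi) hr0.ne']
  rw [sum_congr rfl hinv] at hpow
  calc ∑ i ∈ s, f i ^ r = ((∑ i ∈ s, f i ^ r) ^ (1 / r)) ^ r := by
        rw [← rpow_mul (sum_nonneg hfr), one_div_mul_cancel hr0.ne', rpow_one]
    _ ≤ ((#s : ℝ) ^ (1 / r - 1) * ∑ i ∈ s, f i) ^ r := by
        gcongr
        exact rpow_nonneg (sum_nonneg hfr) _
    _ = (#s : ℝ) ^ (1 - r) * (∑ i ∈ s, f i) ^ r := by
        rw [mul_rpow (by positivity) (sum_nonneg hf), ← rpow_mul (by positivity)]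
        congr 2
        field_simp

end Real

namespace PiLp

variable {ι : Type*} [Fintype ι] {E : ι → Type*} [∀ i, SeminormedAddCommGroup (E i)]

theorem sum_norm_rpow_le (x : PiLp 2 E) {p : ℝ} (hp0 : 0 < p) (hp2 : p ≤ 2) :
    ∑ i, ‖x i‖ ^ p ≤ (Fintype.card ι : ℝ) ^ (1 - p / 2) * ‖x‖ ^ p := by
  have hsq : ∀ t : ℝ, 0 ≤ t → t ^ p = (t ^ 2) ^ (p / 2) := fun t ht => by
    rw [← Real.rpow_natCast_mul ht]
    congr 1
    ring
  rw [hsq _ (norm_nonneg x), norm_sq_eq_of_L2]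
  simp only [hsq _ (norm_nonneg _)]
  exact Real.sum_rpow_le_card_rpow_mul_rpow_sum univ (fun i _ => sq_nonneg _) (by positivity)
    (by linarith)

theorem sum_mul_norm_rpow_le_add [Nonempty ι] {β : ι → ℝ} {b p : ℝ} (hβ : ∀ i, 0 ≤ β i)
    (hβb : ∀ i, β i ≤ b) (hp0 : 0 < p) (hp1 : p ≤ 1) (x y : PiLp 2 E) :
    ∑ i, β i * ‖y i‖ ^ p ≤
      ∑ i, β i * ‖x i‖ ^ p + b * (Fintype.card ι : ℝ) ^ (1 - p / 2) * ‖x - y‖ ^ p := by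
  have hb : 0 ≤ b := (hβ (Classical.arbitrary ι)).trans (hβb _)
  have hterm : ∀ i, β i * ‖y i‖ ^ p ≤ β i * ‖x i‖ ^ p + b * ‖(x - y) i‖ ^ p := fun i => calc
    β i * ‖y i‖ ^ p ≤ β i * (‖x i‖ + ‖(x - y) i‖) ^ p := by
        gcongr
        · exact hβ i
        · exact norm_le_norm_add_norm_sub (x i) (y i)
    _ ≤ β i * (‖x i‖ ^ p + ‖(x - y) i‖ ^ p) := by
        gcongr
        · exact hβ i
        · exact Real.rpow_add_le_add_rpow (norm_nonneg _) (norm_nonneg _) hp0.le hp1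
    _ ≤ β i * ‖x i‖ ^ p + b * ‖(x - y) i‖ ^ p := by
        rw [mul_add]
        gcongr
        exact hβb i
  calc ∑ i, β i * ‖y i‖ ^ p ≤ ∑ i, (β i * ‖x i‖ ^ p + b * ‖(x - y) i‖ ^ p) :=
        sum_le_sum fun i _ => hterm i
    _ = ∑ i, β i * ‖x i‖ ^ p + b * ∑ i, ‖(x - y) i‖ ^ p := by
        rw [sum_add_distrib, mul_sum]
    _ ≤ _ := by
        rw [mul_assoc]
        gcongr
        exact sum_norm_rpow_le (x - y) hp0 (by linarith)

end PiLp

section ExactPenalty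

variable {X : Type*} {Φ g : X → ℝ} {lam : ℝ} {αs : X}

theorem le_of_isMin_penalty (hlam : 0 ≤ lam)
    (hmin : ∀ α, Φ αs + lam * max (g αs) 0 ≤ Φ α + lam * max (g α) 0)
    {α : X} (hα : g α ≤ 0) : Φ αs ≤ Φ α := by
  have hαmin := hmin α
  rw [max_eq_right hα] at hαmin
  linarith [mul_nonneg hlam (le_max_right (g αs) 0)]

theorem mul_infDist_le_of_isMin_penalty [PseudoMetricSpace X] (hlam : 0 ≤ lam) {C : ℝ}
    (hC0 : 0 ≤ C)
    (hC : ∀ α, Metric.infDist α {a | g a ≤ 0} ≤ C * max (g α) 0) (hΦ : 0 ≤ Φ αs)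
    (hmin : ∀ α, Φ αs + lam * max (g αs) 0 ≤ Φ α + lam * max (g α) 0)
    {α : X} (hα : g α ≤ 0) :
    lam * Metric.infDist αs {a | g a ≤ 0} ≤ C * Φ α := by
  have hpen : lam * max (g αs) 0 ≤ Φ α := by
    have hαmin := hmin α
    rw [max_eq_right hα] at hαmin
    linarith
  calc lam * Metric.infDist αs {a | g a ≤ 0} ≤ lam * (C * max (g αs) 0) := by
        gcongr
        exact hC αs
    _ = C * (lam * max (g αs) 0) := by ring
    _ ≤ C * Φ α := by gcongr

end ExactPenalty

theorem mul_rpow_le_of_mul_le {K ε p D M lam : ℝ} (hK : 0 ≤ K) (hε : 0 < ε) (hp : 0 < p)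
    (hD : 0 ≤ D) (hlam : 0 < lam) (hDM : lam * D ≤ M) (hM : M * (K / ε) ^ (1 / p) ≤ lam) :
    K * D ^ p ≤ ε := by
  have ht : 0 ≤ (K / ε) ^ (1 / p) := by positivity
  have hle : D * (K / ε) ^ (1 / p) ≤ 1 := by
    refine le_of_mul_le_mul_left ?_ hlam
    calc lam * (D * (K / ε) ^ (1 / p)) = lam * D * (K / ε) ^ (1 / p) := by ring
      _ ≤ M * (K / ε) ^ (1 / p) := by gcongr
      _ ≤ lam * 1 := by rw [mul_one]; exact hM
  have hpow : D ^ p * (K / ε) ≤ 1 := by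
    calc D ^ p * (K / ε) = (D * (K / ε) ^ (1 / p)) ^ p := by
          rw [Real.mul_rpow hD ht, ← Real.rpow_mul (by positivity), one_div_mul_cancel hp.ne',
            Real.rpow_one]
      _ ≤ 1 := Real.rpow_le_one (by positivity) hle hp.le
  rw [mul_div_assoc', div_le_one hε] at hpow
  linarith

theorem stmt2_general (L : ℕ) (p : ℝ) (hp0 : 0 < p) (hp1 : p < 1)
    (β : Fin (L + 1) → ℝ) (hβ : ∀ l, 0 < β l)
    (Φ : V L → ℝ)
    (hΦ : ∀ α : V L, Φ α = ∑ l : Fin (L + 1), β l * ‖α l‖ ^ p)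
    (g : V L → ℝ)
    (αt : V L) (hgαt : g αt < 0)
    (C : ℝ) (hC0 : 0 < C)
    (hC : ∀ α : V L, Metric.infDist α {a : V L | g a ≤ 0} ≤ C * max (g α) 0)
    (βbar : ℝ) (hβbar : IsGreatest (Set.range β) βbar)
    (ε : ℝ) (hε : 0 < ε)
    (lam : ℝ) (hlam0 : 0 < lam)
    (hlam : C * βbar ^ (1 / p) * (ε * ((L : ℝ) + 1) ^ (p / 2 - 1)) ^ (-(1 / p)) * Φ αt ≤ lam)
    (αs : V L)
    (hmin : ∀ α : V L, Φ αs + lam * max (g αs) 0 ≤ Φ α + lam * max (g α) 0)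
    (αε : V L)
    (hαεproj : ‖αs - αε‖ = Metric.infDist αs {a : V L | g a ≤ 0}) :
    ∀ α : V L, g α ≤ 0 → Φ αε ≤ Φ α + ε := by
  intro α hα
  set n : ℝ := (L : ℝ) + 1
  set K : ℝ := βbar * n ^ (1 - p / 2)
  have hn : 0 < n := by positivity
  have hβle : ∀ l, β l ≤ βbar := fun l => hβbar.2 ⟨l, rfl⟩
  have hβbar0 : 0 < βbar := (hβ 0).trans_le (hβle 0)
  have hΦ0 : 0 ≤ Φ αs := by
    rw [hΦ]
    exact sum_nonneg fun l _ => mul_nonneg (hβ l).le (Real.rpow_nonneg (norm_nonneg _) p)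
  have hdist : lam * ‖αs - αε‖ ≤ C * Φ αt :=
    hαεproj ▸ mul_infDist_le_of_isMin_penalty hlam0.le hC0.le hC hΦ0 hmin hgαt.le
  have hrate : C * Φ αt * (K / ε) ^ (1 / p) ≤ lam := by
    have hexp : (ε * n ^ (p / 2 - 1)) ^ (-(1 / p)) = (n ^ (1 - p / 2) / ε) ^ (1 / p) := by
      rw [Real.rpow_neg (by positivity), ← Real.inv_rpow (by positivity), mul_inv,
        ← Real.rpow_neg hn.le, neg_sub, inv_mul_eq_div]
    rw [mul_div_assoc, Real.mul_rpow hβbar0.le (by positivity), ← hexp]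
    linarith
  have hclose : K * ‖αs - αε‖ ^ p ≤ ε :=
    mul_rpow_le_of_mul_le (by positivity) hε hp0 (norm_nonneg _) hlam0 hdist hrate
  calc Φ αε ≤ Φ αs + K * ‖αs - αε‖ ^ p := by
        have hHolder := PiLp.sum_mul_norm_rpow_le_add (fun l => (hβ l).le) hβle hp0 hp1.le αs αε
        rwa [Fintype.card_fin, Nat.cast_add_one, ← hΦ, ← hΦ] at hHolder
    _ ≤ Φ α + ε := add_le_add (le_of_isMin_penalty hlam0.le hmin hα) hclose

/-- for `λ` large enough, the projection onto the feasible set of a global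
minimizer of the penalty function `F_λ` is an `ε`-minimizer of the constrained problem. -/
theorem stmt2 (L : ℕ) (p : ℝ) (hp0 : 0 < p) (hp1 : p < 1)
    (β : Fin (L + 1) → ℝ) (hβ : ∀ l, 0 < β l)
    (Φ : V L → ℝ)
    (hΦ : ∀ α : V L, Φ α = ∑ l : Fin (L + 1), β l * ‖α l‖ ^ p)
    (Yh : V L →ₗ[ℂ] V L)
    (hsa : ∀ x y : V L, (inner ℂ (Yh x) y : ℂ) = inner ℂ x (Yh y))
    (hpd : ∀ α : V L, α ≠ 0 → 0 < (inner ℂ α (Yh α) : ℂ).re)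
    (αo : V L) (c ϱ : ℝ)
    (g : V L → ℝ)
    (hg : ∀ α : V L, g α = (inner ℂ α (Yh α) : ℂ).re - 2 * (inner ℂ αo α : ℂ).re + c - ϱ)
    (αt : V L) (hαt : Yh αt = αo) (hgαt : g αt < 0)
    (C : ℝ) (hC0 : 0 < C)
    (hC : ∀ α : V L, Metric.infDist α {a : V L | g a ≤ 0} ≤ C * max (g α) 0)
    (βbar : ℝ) (hβbar : IsGreatest (Set.range β) βbar)
    (ε : ℝ) (hε : 0 < ε)
    (lam : ℝ) (hlam0 : 0 < lam)
    (hlam : C * βbar ^ (1 / p) * (ε * ((L : ℝ) + 1) ^ (p / 2 - 1)) ^ (-(1 / p)) * Φ αt ≤ lam)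
    (αs : V L)
    (hmin : ∀ α : V L, Φ αs + lam * max (g αs) 0 ≤ Φ α + lam * max (g α) 0)
    (αε : V L) (hαεfeas : g αε ≤ 0)
    (hαεproj : ‖αs - αε‖ = Metric.infDist αs {a : V L | g a ≤ 0}) :
    ∀ α : V L, g α ≤ 0 → Φ αε ≤ Φ α + ε :=
  stmt2_general L p hp0 hp1 β hβ Φ hΦ g αt hgαt C hC0 hC βbar hβbar ε hε lam hlam0 hlam αs hmin αε
    hαεproj
end

section
/- Let λ > 0. If α* ∈ V is a local minimizer of the penalty function F_λ on V, then α* is a scaled first-order stationary point of the penalty problem: there exists ξ ∈ ℝ such that p·β_l·‖α*_l‖^p·α*_l + 2λξ·‖α*_l‖²·(Ŷα* − α°)_l = 0 for every l ∈ {0,…,L}, where ξ = 0 if g(α*) < 0, ξ ∈ [0,1] if g(α*) = 0, and ξ = 1 if g(α*) > 0. -/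
/-!
On a line `t ↦ α* + t • d` whose direction vanishes on the groups where `α*` does, `Φ` is
differentiable with derivative `Re⟪u, d⟫`, `u_l = p β_l ‖α*_l‖^(p-2) α*_l`, and `g` is a quadratic
polynomial in `t` with slope `2 Re⟪v, d⟫`, `v` the part of `Ŷα* − α°` on those groups. Fermat's
rule for `t ↦ Φ + λ max(g, 0)` gives `u + 2λv = 0` if `g(α*) > 0`, `u = 0` if `g(α*) < 0`, and
`Re⟪u, d⟫ + λ max(2 Re⟪v, d⟫, 0) ≥ 0` for all `d` if `g(α*) = 0`; the latter forces
`u + 2λξ v = 0` for some `ξ ∈ [0, 1]`. Multiplying the `l`-th group by `‖α*_l‖²` turns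
`‖α*_l‖^(p-2)` into `‖α*_l‖^p` and makes the identity trivial on the groups where `α*_l = 0`.
-/

open Filter Topology Set
open scoped InnerProductSpace

section PosPart

variable {f : ℝ → ℝ} {f' a b c lam : ℝ}

lemma tendsto_quadratic_zero (a b c : ℝ) :
    Tendsto (fun t : ℝ => a + b * t + c * t ^ 2) (𝓝 0) (𝓝 a) := by
  have : Continuous fun t : ℝ => a + b * t + c * t ^ 2 := by fun_prop
  simpa using this.tendsto 0

lemma HasDerivAt.eq_zero_of_isLocalMin_add_posPart_of_neg (hf : HasDerivAt f f' 0) (ha : a < 0)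
    (hmin : IsLocalMin (fun t => f t + lam * max (a + b * t + c * t ^ 2) 0) 0) : f' = 0 := by
  refine (hmin.congr ?_).hasDerivAt_eq_zero hf
  filter_upwards [(tendsto_quadratic_zero a b c).eventually_lt_const ha] with t ht
  rw [max_eq_right ht.le, mul_zero, add_zero]

lemma HasDerivAt.add_mul_eq_zero_of_isLocalMin_add_posPart_of_pos (hf : HasDerivAt f f' 0)
    (ha : 0 < a) (hmin : IsLocalMin (fun t => f t + lam * max (a + b * t + c * t ^ 2) 0) 0) :
    f' + lam * b = 0 := by
  have hq : HasDerivAt (fun t => a + b * t + c * t ^ 2) b 0 := by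
    simpa using (((hasDerivAt_id 0).const_mul b).const_add a).fun_add
      ((hasDerivAt_pow 2 0).const_mul c)
  refine (hmin.congr ?_).hasDerivAt_eq_zero (hf.fun_add (hq.const_mul lam))
  filter_upwards [(tendsto_quadratic_zero a b c).eventually_const_lt ha] with t ht
  rw [max_eq_left ht.le]

lemma HasDerivAt.nonneg_of_isLocalMin_add_posPart (hf : HasDerivAt f f' 0) (hlam : 0 ≤ lam)
    (hmin : IsLocalMin (fun t => f t + lam * max (b * t + c * t ^ 2) 0) 0) :
    0 ≤ f' + lam * max b 0 := by
  -- for `t ≥ 0` this smooth function lies above the minimised one and agrees with it at `0`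
  set h := fun t => f t + lam * (max b 0 * t + |c| * t ^ 2)
  have hh : HasDerivAt h (f' + lam * max b 0) 0 := by
    simpa using hf.fun_add ((((hasDerivAt_id 0).const_mul (max b 0)).fun_add
      ((hasDerivAt_pow 2 0).const_mul |c|)).const_mul lam)
  have hmin' : IsLocalMinOn h (Ici 0) 0 := by
    filter_upwards [nhdsWithin_le_nhds hmin, self_mem_nhdsWithin] with t ht (ht0 : 0 ≤ t)
    have hle : max (b * t + c * t ^ 2) 0 ≤ max b 0 * t + |c| * t ^ 2 :=
      max_le (by nlinarith [le_max_left b 0, le_abs_self c, sq_nonneg t])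
        (by positivity)
    simp only [h] at ht ⊢
    simp only [mul_zero, zero_pow two_ne_zero, add_zero, max_self] at ht ⊢
    nlinarith
  have hcone : (1 : ℝ) ∈ posTangentConeAt (Ici 0) 0 :=
    mem_posTangentConeAt_of_segment_subset (by simp [Icc_subset_Ici_self])
  simpa using hmin'.hasFDerivWithinAt_nonneg hh.hasFDerivAt.hasFDerivWithinAt hcone

end PosPart

section InnerProduct

variable {E : Type*} [NormedAddCommGroup E] [InnerProductSpace ℂ E]

lemma re_inner_self_eq_norm_sq (x : E) : (⟪x, x⟫_ℂ).re = ‖x‖ ^ 2 :=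
  inner_self_eq_norm_sq (𝕜 := ℂ) x

lemma re_inner_comm (x y : E) : (⟪x, y⟫_ℂ).re = (⟪y, x⟫_ℂ).re :=
  inner_re_symm (𝕜 := ℂ) x y

lemma re_inner_real_smul_left (r : ℝ) (x y : E) : (⟪r • x, y⟫_ℂ).re = r * (⟪x, y⟫_ℂ).re := by
  simp [← Complex.coe_smul, mul_comm]

lemma re_inner_real_smul_right (r : ℝ) (x y : E) : (⟪x, r • y⟫_ℂ).re = r * (⟪x, y⟫_ℂ).re := by
  simp [← Complex.coe_smul]

lemma eq_zero_of_forall_re_inner_nonneg {u : E} (h : ∀ d, 0 ≤ (⟪u, d⟫_ℂ).re) : u = 0 := by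
  have := h (-u)
  rw [inner_neg_right, Complex.neg_re, re_inner_self_eq_norm_sq] at this
  exact norm_eq_zero.mp (by nlinarith [norm_nonneg u])

lemma exists_mem_Icc_add_smul_eq_zero {u v : E}
    (h : ∀ d, 0 ≤ (⟪u, d⟫_ℂ).re + max (⟪v, d⟫_ℂ).re 0) : ∃ ξ ∈ Icc (0 : ℝ) 1, u + ξ • v = 0 := by
  rcases eq_or_ne v 0 with rfl | hv
  · refine ⟨0, by simp, ?_⟩
    simpa using eq_zero_of_forall_re_inner_nonneg fun d => by simpa using h d
  have hv2 : 0 < ‖v‖ ^ 2 := by positivity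
  -- split `u = μ • v + w` with `w` real-orthogonal to `v`; testing with `-w` forces `w = 0`
  set μ := (⟪v, u⟫_ℂ).re / ‖v‖ ^ 2
  set w := u - μ • v
  have hvw : (⟪v, w⟫_ℂ).re = 0 := by
    simp only [w, inner_sub_right, Complex.sub_re, re_inner_real_smul_right,
      re_inner_self_eq_norm_sq, μ]
    field_simp
    ring
  have hw : w = 0 := by
    have := h (-w)
    rw [inner_neg_right, inner_neg_right, Complex.neg_re, Complex.neg_re, hvw, neg_zero,
      max_self, add_zero, show u = w + μ • v by simp [w], inner_add_left, Complex.add_re,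
      re_inner_real_smul_left, hvw, re_inner_self_eq_norm_sq] at this
    exact norm_eq_zero.mp (by nlinarith [norm_nonneg w])
  have hu : u = μ • v := by simpa [w, sub_eq_zero] using hw
  have h₁ := h v
  have h₂ := h (-v)
  simp only [hu, inner_neg_right, Complex.neg_re, re_inner_real_smul_left,
    re_inner_self_eq_norm_sq, max_eq_left hv2.le, max_eq_right (neg_nonpos.mpr hv2.le)] at h₁ h₂
  refine ⟨-μ, ⟨by nlinarith, by nlinarith⟩, by simp [hu]⟩

theorem exists_multiplier_of_isLocalMin_add_posPart {u v : E} {a lam : ℝ} (hlam : 0 ≤ lam)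
    (f : E → ℝ → ℝ) (c : E → ℝ) (hf : ∀ d, HasDerivAt (f d) (⟪u, d⟫_ℂ).re 0)
    (hmin : ∀ d, IsLocalMin
      (fun t => f d t + lam * max (a + 2 * (⟪v, d⟫_ℂ).re * t + c d * t ^ 2) 0) 0) :
    ∃ ξ : ℝ, (a < 0 → ξ = 0) ∧ (a = 0 → ξ ∈ Icc (0 : ℝ) 1) ∧ (0 < a → ξ = 1) ∧
      u + (2 * lam * ξ) • v = 0 := by
  rcases lt_trichotomy a 0 with ha | rfl | ha
  · have hu : u = 0 := eq_zero_of_forall_re_inner_nonneg fun d =>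
      ((hf d).eq_zero_of_isLocalMin_add_posPart_of_neg ha (hmin d)).ge
    exact ⟨0, fun _ => rfl, fun h => (ha.ne h).elim, fun h => (h.not_gt ha).elim, by simp [hu]⟩
  · obtain ⟨ξ, hξ, huv⟩ := exists_mem_Icc_add_smul_eq_zero (u := u) (v := (2 * lam) • v) fun d => by
      have hmax : lam * max (2 * (⟪v, d⟫_ℂ).re) 0 = max (2 * lam * (⟪v, d⟫_ℂ).re) 0 := by
        rw [mul_max_of_nonneg _ _ hlam, mul_zero, mul_left_comm, mul_assoc]
      have := (hf d).nonneg_of_isLocalMin_add_posPart hlam (by simpa only [zero_add] using hmin d)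
      rwa [re_inner_real_smul_left, ← hmax]
    refine ⟨ξ, fun h => (lt_irrefl 0 h).elim, fun _ => hξ, fun h => (lt_irrefl 0 h).elim, ?_⟩
    rwa [mul_comm, mul_smul]
  · have huv : u + (2 * lam) • v = 0 := eq_zero_of_forall_re_inner_nonneg fun d => by
      have := (hf d).add_mul_eq_zero_of_isLocalMin_add_posPart_of_pos ha (hmin d)
      rw [inner_add_left, Complex.add_re, re_inner_real_smul_left]
      linarith
    exact ⟨1, fun h => (h.not_gt ha).elim, fun h => (ha.ne' h).elim, fun _ => rfl, by simpa⟩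

lemma re_inner_map_add_smul (Y : E →ₗ[ℂ] E) (hY : ∀ x y, ⟪Y x, y⟫_ℂ = ⟪x, Y y⟫_ℂ)
    (x d : E) (t : ℝ) :
    (⟪x + t • d, Y (x + t • d)⟫_ℂ).re =
      (⟪x, Y x⟫_ℂ).re + 2 * (⟪Y x, d⟫_ℂ).re * t + (⟪d, Y d⟫_ℂ).re * t ^ 2 := by
  have hsym : (⟪x, Y d⟫_ℂ).re = (⟪Y x, d⟫_ℂ).re := by rw [hY]
  rw [← Complex.coe_smul, map_add, map_smul]
  simp only [inner_add_left, inner_add_right, inner_smul_left, inner_smul_right, Complex.add_re,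
    Complex.mul_re, Complex.conj_re, Complex.conj_im, Complex.ofReal_re, Complex.ofReal_im, hsym]
  rw [re_inner_comm d]
  ring

lemma hasDerivAt_norm_add_smul_rpow (p : ℝ) {x : E} (hx : x ≠ 0) (w : E) :
    HasDerivAt (fun t : ℝ => ‖x + t • w‖ ^ p) (p * ‖x‖ ^ (p - 2) * (⟪x, w⟫_ℂ).re) 0 := by
  let _ : InnerProductSpace ℝ E := InnerProductSpace.rclikeToReal ℂ E
  have h := (((hasDerivAt_id (0 : ℝ)).smul_const w).const_add x).norm_sq.rpow_const (p := p / 2)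
    (Or.inl (by simpa using hx))
  simp only [id, zero_smul, add_zero, one_smul, real_inner_eq_re_inner] at h
  convert h using 1
  · ext t
    rw [← Real.rpow_natCast, ← Real.rpow_mul (norm_nonneg _)]
    ring_nf
  · rw [← Real.rpow_natCast, ← Real.rpow_mul (norm_nonneg _)]
    push_cast
    ring_nf
    rfl

lemma IsLocalMin.comp_add_smul {F : E → ℝ} {x : E} (h : IsLocalMin F x) (d : E) :
    IsLocalMin (fun t : ℝ => F (x + t • d)) 0 :=
  IsLocalMin.comp_continuous (g := fun t : ℝ => x + t • d) (by simpa using h) (by fun_prop)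

end InnerProduct

section GroupNorm

variable {ι : Type*} [Fintype ι] {E : ι → Type*} [∀ i, NormedAddCommGroup (E i)]
  [∀ i, InnerProductSpace ℂ (E i)]

open scoped Classical in
noncomputable def restrictToSupport (a x : PiLp 2 E) : PiLp 2 E :=
  WithLp.toLp 2 fun i => if a i = 0 then 0 else x i

/-- The gradient of `x ↦ ∑ i, β i * ‖x i‖ ^ p` at `a`, on the groups where `a` does not vanish. -/
noncomputable def gradGroupNormRpow (p : ℝ) (β : ι → ℝ) (a : PiLp 2 E) : PiLp 2 E :=
  WithLp.toLp 2 fun i => (p * β i * ‖a i‖ ^ (p - 2)) • a i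

omit [Fintype ι] [∀ i, InnerProductSpace ℂ (E i)] in
lemma restrictToSupport_apply_of_eq_zero {a : PiLp 2 E} {i : ι} (h : a i = 0) (x : PiLp 2 E) :
    restrictToSupport a x i = 0 := by
  simp [restrictToSupport, h]

omit [Fintype ι] [∀ i, InnerProductSpace ℂ (E i)] in
lemma restrictToSupport_apply_of_ne_zero {a : PiLp 2 E} {i : ι} (h : a i ≠ 0) (x : PiLp 2 E) :
    restrictToSupport a x i = x i := by
  simp [restrictToSupport, h]

lemma inner_restrictToSupport_right (a x y : PiLp 2 E) :
    ⟪x, restrictToSupport a y⟫_ℂ = ⟪restrictToSupport a x, y⟫_ℂ := by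
  simp only [PiLp.inner_apply]
  refine Finset.sum_congr rfl fun i _ => ?_
  by_cases h : a i = 0
  · simp [restrictToSupport_apply_of_eq_zero h]
  · simp [restrictToSupport_apply_of_ne_zero h]

lemma hasDerivAt_sum_norm_rpow_restrictToSupport (p : ℝ) (β : ι → ℝ) (a d : PiLp 2 E) :
    HasDerivAt (fun t : ℝ => ∑ i, β i * ‖(a + t • restrictToSupport a d) i‖ ^ p)
      (⟪gradGroupNormRpow p β a, d⟫_ℂ).re 0 := by
  rw [PiLp.inner_apply, Complex.re_sum]
  refine HasDerivAt.fun_sum fun i _ => ?_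
  by_cases h : a i = 0
  · simpa [restrictToSupport_apply_of_eq_zero h, gradGroupNormRpow, h] using hasDerivAt_const _ _
  · simp only [PiLp.add_apply, PiLp.smul_apply, restrictToSupport_apply_of_ne_zero h]
    refine ((hasDerivAt_norm_add_smul_rpow p h (d i)).const_mul (β i)).congr_deriv ?_
    simp only [gradGroupNormRpow, PiLp.toLp_apply, re_inner_real_smul_left]
    ring

omit [Fintype ι] in
lemma smul_add_smul_eq_norm_sq_smul (p : ℝ) (β : ι → ℝ) (a y : PiLp 2 E) (r : ℝ) (i : ι) :
    (p * β i * ‖a i‖ ^ p) • a i + (r * ‖a i‖ ^ 2) • y i =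
      ‖a i‖ ^ 2 • (gradGroupNormRpow p β a + r • restrictToSupport a y) i := by
  by_cases h : a i = 0
  · simp [h]
  have hpow : ‖a i‖ ^ p = ‖a i‖ ^ 2 * ‖a i‖ ^ (p - 2) := by
    rw [← Real.rpow_natCast, ← Real.rpow_add (norm_pos_iff.mpr h)]
    norm_num
  simp only [PiLp.add_apply, PiLp.smul_apply, restrictToSupport_apply_of_ne_zero h,
    gradGroupNormRpow, smul_add, smul_smul, hpow]
  congr 2 <;> ring

end GroupNorm

theorem stmt3_general (L : ℕ) (p : ℝ)
    (β : Fin (L + 1) → ℝ)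
    (Φ : V L → ℝ)
    (hΦ : ∀ α : V L, Φ α = ∑ l : Fin (L + 1), β l * ‖α l‖ ^ p)
    (Yh : V L →ₗ[ℂ] V L)
    (hsa : ∀ x y : V L, (inner ℂ (Yh x) y : ℂ) = inner ℂ x (Yh y))
    (αo : V L) (c ϱ : ℝ)
    (g : V L → ℝ)
    (hg : ∀ α : V L, g α = (inner ℂ α (Yh α) : ℂ).re - 2 * (inner ℂ αo α : ℂ).re + c - ϱ)
    (lam : ℝ) (hlam : 0 < lam)
    (αs : V L)
    (hloc : ∃ N ∈ nhds αs, ∀ α ∈ N,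
      Φ αs + lam * max (g αs) 0 ≤ Φ α + lam * max (g α) 0) :
    ∃ ξ : ℝ,
      (g αs < 0 → ξ = 0) ∧
      (g αs = 0 → ξ ∈ Set.Icc (0 : ℝ) 1) ∧
      (0 < g αs → ξ = 1) ∧
      ∀ l : Fin (L + 1),
        (p * β l * ‖αs l‖ ^ p) • αs l
          + (2 * lam * ξ * ‖αs l‖ ^ 2) • ((Yh αs - αo) l) = 0 := by
  obtain ⟨N, hN, hNmin⟩ := hloc
  have hmin : IsLocalMin (fun α => Φ α + lam * max (g α) 0) αs := Filter.mem_of_superset hN hNmin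
  have hline : ∀ d : V L, ∀ t : ℝ, g (αs + t • d) =
      g αs + 2 * (⟪Yh αs - αo, d⟫_ℂ).re * t + (⟪d, Yh d⟫_ℂ).re * t ^ 2 := by
    intro d t
    simp only [hg, re_inner_map_add_smul Yh hsa, inner_add_right, inner_sub_left, Complex.add_re,
      Complex.sub_re, re_inner_real_smul_right]
    ring
  obtain ⟨ξ, hξneg, hξzero, hξpos, hξ⟩ := exists_multiplier_of_isLocalMin_add_posPart hlam.le
    (u := gradGroupNormRpow p β αs) (v := restrictToSupport αs (Yh αs - αo))
    (fun d t => Φ (αs + t • restrictToSupport αs d))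
    (fun d => (⟪restrictToSupport αs d, Yh (restrictToSupport αs d)⟫_ℂ).re)
    (fun d => by simpa only [hΦ] using hasDerivAt_sum_norm_rpow_restrictToSupport p β αs d)
    (fun d => by
      simpa only [hline, inner_restrictToSupport_right] using
        hmin.comp_add_smul (restrictToSupport αs d))
  refine ⟨ξ, hξneg, hξzero, hξpos, fun l => ?_⟩
  rw [smul_add_smul_eq_norm_sq_smul, hξ]
  simp

/-- a local minimizer of the penalty function `F_λ` is a scaled first-order
stationary point of the penalty problem. -/
theorem stmt3 (L : ℕ) (p : ℝ) (hp0 : 0 < p) (hp1 : p < 1)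
    (β : Fin (L + 1) → ℝ) (hβ : ∀ l, 0 < β l)
    (Φ : V L → ℝ)
    (hΦ : ∀ α : V L, Φ α = ∑ l : Fin (L + 1), β l * ‖α l‖ ^ p)
    (Yh : V L →ₗ[ℂ] V L)
    (hsa : ∀ x y : V L, (inner ℂ (Yh x) y : ℂ) = inner ℂ x (Yh y))
    (hpd : ∀ α : V L, α ≠ 0 → 0 < (inner ℂ α (Yh α) : ℂ).re)
    (αo : V L) (c ϱ : ℝ)
    (g : V L → ℝ)
    (hg : ∀ α : V L, g α = (inner ℂ α (Yh α) : ℂ).re - 2 * (inner ℂ αo α : ℂ).re + c - ϱ)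
    (lam : ℝ) (hlam : 0 < lam)
    (αs : V L)
    (hloc : ∃ N ∈ nhds αs, ∀ α ∈ N,
      Φ αs + lam * max (g αs) 0 ≤ Φ α + lam * max (g α) 0) :
    ∃ ξ : ℝ,
      (g αs < 0 → ξ = 0) ∧
      (g αs = 0 → ξ ∈ Set.Icc (0 : ℝ) 1) ∧
      (0 < g αs → ξ = 1) ∧
      ∀ l : Fin (L + 1),
        (p * β l * ‖αs l‖ ^ p) • αs l
          + (2 * lam * ξ * ‖αs l‖ ^ 2) • ((Yh αs - αo) l) = 0 :=
  stmt3_general L p β Φ hΦ Yh hsa αo c ϱ g hg lam hlam αs hloc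
end

section
/- Let λ > 0 and c̃ > 0, and let α* ∈ V be a scaled first-order stationary point of the penalty problem (i.e., there exists ξ ∈ ℝ such that p·β_l·‖α*_l‖^p·α*_l + 2λξ·‖α*_l‖²·(Ŷα* − α°)_l = 0 for every l ∈ {0,…,L}, where ξ = 0 if g(α*) < 0, ξ ∈ [0,1] if g(α*) = 0, and ξ = 1 if g(α*) > 0). Suppose ‖Ŷα* − α°‖ ≤ c̃. Then for every l ∈ {0,…,L} with α*_l ≠ 0, one has ‖α*_l‖ ≥ (p·β_l/(2λc̃))^{1/(1−p)}. -/
/-!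
Taking norms in the stationarity equation of a nonzero group gives
`p β_l ‖α*_l‖^p ‖α*_l‖ = 2 λ |ξ| ‖α*_l‖² ‖(Ŷα* − α°)_l‖ ≤ 2 λ c̃ ‖α*_l‖²`, since `ξ ∈ [0, 1]`
and a group is no longer than the whole vector. Dividing by `‖α*_l‖^(1 + p)` leaves
`p β_l ≤ 2 λ c̃ ‖α*_l‖^(1 - p)`; as `1 - p > 0`, raising to the power `1 / (1 - p)` gives the bound.
-/

/-- `ξ` is a subgradient of `max 0` at `s`. -/
lemma mem_Icc_of_sign_cases {s ξ : ℝ} (hneg : s < 0 → ξ = 0) (hzero : s = 0 → ξ ∈ Set.Icc 0 1)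
    (hpos : 0 < s → ξ = 1) : ξ ∈ Set.Icc (0 : ℝ) 1 := by
  rcases lt_trichotomy s 0 with h | h | h
  · simp [hneg h]
  · exact hzero h
  · simp [hpos h]

lemma abs_mul_norm_eq_of_smul_add_smul_eq_zero {E : Type*} [SeminormedAddCommGroup E]
    [NormedSpace ℝ E] {a b : ℝ} {x y : E} (h : a • x + b • y = 0) :
    |a| * ‖x‖ = |b| * ‖y‖ := by
  have := congrArg norm (eq_neg_of_add_eq_zero_left h)
  rwa [norm_neg, norm_smul, norm_smul, Real.norm_eq_abs, Real.norm_eq_abs] at this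

lemma Real.rpow_one_div_one_sub_le_of_mul_rpow_le {p a K t : ℝ} (hp1 : p < 1) (ha : 0 ≤ a)
    (hK : 0 < K) (ht : 0 < t) (h : a * t ^ p ≤ K * t) :
    (a / K) ^ (1 / (1 - p)) ≤ t := by
  have h1p : 0 < 1 - p := by linarith
  rw [one_div, Real.rpow_inv_le_iff_of_pos (div_nonneg ha hK.le) ht.le h1p,
    div_le_iff₀ hK, Real.rpow_sub ht, Real.rpow_one, div_mul_eq_mul_div,
    le_div_iff₀ (Real.rpow_pos_of_pos ht p)]
  linarith

theorem stmt4_general (L : ℕ) (p : ℝ) (hp0 : 0 < p) (hp1 : p < 1)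
    (β : Fin (L + 1) → ℝ) (hβ : ∀ l, 0 < β l)
    (Yh : V L →ₗ[ℂ] V L)
    (αo : V L)
    (g : V L → ℝ)
    (lam ct : ℝ) (hlam : 0 < lam) (hct : 0 < ct)
    (αs : V L) (ξ : ℝ)
    (hξ0 : g αs < 0 → ξ = 0)
    (hξmid : g αs = 0 → ξ ∈ Set.Icc (0 : ℝ) 1)
    (hξ1 : 0 < g αs → ξ = 1)
    (hstat : ∀ l : Fin (L + 1),
      (p * β l * ‖αs l‖ ^ p) • αs l
        + (2 * lam * ξ * ‖αs l‖ ^ 2) • ((Yh αs - αo) l) = 0)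
    (hbound : ‖Yh αs - αo‖ ≤ ct) :
    ∀ l : Fin (L + 1), αs l ≠ 0 →
      (p * β l / (2 * lam * ct)) ^ (1 / (1 - p)) ≤ ‖αs l‖ := by
  intro l hl
  set t := ‖αs l‖
  have hβl := hβ l
  have ht : 0 < t := norm_pos_iff.mpr hl
  obtain ⟨hξ_nonneg, hξ_le_one⟩ := mem_Icc_of_sign_cases hξ0 hξmid hξ1
  have hgroup : ‖(Yh αs - αo) l‖ ≤ ct := (PiLp.norm_apply_le _ l).trans hbound
  have hnorms := abs_mul_norm_eq_of_smul_add_smul_eq_zero (hstat l)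
  rw [abs_of_pos (by positivity), abs_of_nonneg (by positivity)] at hnorms
  refine Real.rpow_one_div_one_sub_le_of_mul_rpow_le hp1 (by positivity)
    (by positivity) ht ?_
  have hcoef : ξ * ‖(Yh αs - αo) l‖ ≤ ct :=
    (mul_le_mul hξ_le_one hgroup (norm_nonneg _) zero_le_one).trans_eq (one_mul ct)
  have hmain : p * β l * t ^ p * t ≤ 2 * lam * ct * t * t := by
    calc p * β l * t ^ p * t = 2 * lam * t ^ 2 * (ξ * ‖(Yh αs - αo) l‖) := by
          rw [hnorms]; ring
      _ ≤ 2 * lam * t ^ 2 * ct := by gcongr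
      _ = 2 * lam * ct * t * t := by ring
  exact le_of_mul_le_mul_right hmain ht

/-- lower bound on the norms of the nonzero groups of a scaled first-order
stationary point of the penalty problem. -/
theorem stmt4 (L : ℕ) (p : ℝ) (hp0 : 0 < p) (hp1 : p < 1)
    (β : Fin (L + 1) → ℝ) (hβ : ∀ l, 0 < β l)
    (Yh : V L →ₗ[ℂ] V L)
    (hsa : ∀ x y : V L, (inner ℂ (Yh x) y : ℂ) = inner ℂ x (Yh y))
    (hpd : ∀ α : V L, α ≠ 0 → 0 < (inner ℂ α (Yh α) : ℂ).re)
    (αo : V L) (c ϱ : ℝ)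
    (g : V L → ℝ)
    (hg : ∀ α : V L, g α = (inner ℂ α (Yh α) : ℂ).re - 2 * (inner ℂ αo α : ℂ).re + c - ϱ)
    (lam ct : ℝ) (hlam : 0 < lam) (hct : 0 < ct)
    (αs : V L) (ξ : ℝ)
    (hξ0 : g αs < 0 → ξ = 0)
    (hξmid : g αs = 0 → ξ ∈ Set.Icc (0 : ℝ) 1)
    (hξ1 : 0 < g αs → ξ = 1)
    (hstat : ∀ l : Fin (L + 1),
      (p * β l * ‖αs l‖ ^ p) • αs l
        + (2 * lam * ξ * ‖αs l‖ ^ 2) • ((Yh αs - αo) l) = 0)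
    (hbound : ‖Yh αs - αo‖ ≤ ct) :
    ∀ l : Fin (L + 1), αs l ≠ 0 →
      (p * β l / (2 * lam * ct)) ^ (1 / (1 - p)) ≤ ‖αs l‖ :=
  stmt4_general L p hp0 hp1 β hβ Yh αo g lam ct hlam hct αs ξ hξ0 hξmid hξ1 hstat hbound
end

section
/- Let c̃ > 0 and let α* ∈ V be a scaled KKT point of the constrained problem with multiplier ν ≥ 0 (i.e., p·β_l·‖α*_l‖^p·α*_l + 2ν·‖α*_l‖²·(Ŷα* − α°)_l = 0 for every l ∈ {0,…,L}, ν·g(α*) = 0, and g(α*) ≤ 0), and suppose ‖Ŷα* − α°‖ ≤ c̃. Then for every l ∈ {0,…,L} with α*_l ≠ 0, one has ν > 0 and ‖α*_l‖ ≥ (p·β_l/(2νc̃))^{1/(1−p)}. -/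
section

variable {E : Type*} [NormedAddCommGroup E] [NormedSpace ℝ E]

lemma mul_norm_eq_of_smul_add_smul_eq_zero {a b : ℝ} (ha : 0 ≤ a) (hb : 0 ≤ b) {x w : E}
    (h : a • x + b • w = 0) : a * ‖x‖ = b * ‖w‖ := by
  have hneg : a • x = -(b • w) := eq_neg_of_add_eq_zero_left h
  simpa [norm_smul, abs_of_nonneg ha, abs_of_nonneg hb] using congrArg norm hneg

lemma le_mul_rpow_one_sub_of_mul_rpow_mul_le {a c d p : ℝ} (ha : 0 < a)
    (h : c * a ^ p * a ≤ d * a ^ 2) : c ≤ d * a ^ (1 - p) := by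
  have hsplit : a ^ 2 = a ^ (1 - p) * (a ^ p * a) := by
    rw [← Real.rpow_add_one ha.ne', ← Real.rpow_add ha, ← Real.rpow_natCast]
    congr 1
    push_cast
    ring
  have hpos : 0 < a ^ p * a := mul_pos (Real.rpow_pos_of_pos ha p) ha
  refine le_of_mul_le_mul_right ?_ hpos
  calc c * (a ^ p * a) = c * a ^ p * a := by ring
    _ ≤ d * a ^ 2 := h
    _ = d * a ^ (1 - p) * (a ^ p * a) := by rw [hsplit]; ring

theorem pos_and_rpow_le_norm_of_stationary {p c ν K : ℝ} (hp1 : p < 1) (hc : 0 < c)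
    (hν : 0 ≤ ν) (hK : 0 < K) {x w : E} (hx : x ≠ 0) (hw : ‖w‖ ≤ K)
    (hstat : (c * ‖x‖ ^ p) • x + (2 * ν * ‖x‖ ^ 2) • w = 0) :
    0 < ν ∧ (c / (2 * ν * K)) ^ (1 / (1 - p)) ≤ ‖x‖ := by
  have hx0 : 0 < ‖x‖ := norm_pos_iff.mpr hx
  have hcoef : 0 < c * ‖x‖ ^ p := mul_pos hc (Real.rpow_pos_of_pos hx0 p)
  have hν0 : 0 < ν := by
    refine hν.lt_of_ne fun hν_eq => hx ?_
    rw [← hν_eq] at hstat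
    simpa [hcoef.ne'] using hstat
  have hnorm : c * ‖x‖ ^ p * ‖x‖ = 2 * ν * ‖x‖ ^ 2 * ‖w‖ :=
    mul_norm_eq_of_smul_add_smul_eq_zero hcoef.le (by positivity) hstat
  have hle : c ≤ 2 * ν * K * ‖x‖ ^ (1 - p) := by
    refine le_mul_rpow_one_sub_of_mul_rpow_mul_le hx0 ?_
    calc c * ‖x‖ ^ p * ‖x‖ = 2 * ν * ‖x‖ ^ 2 * ‖w‖ := hnorm
      _ ≤ 2 * ν * ‖x‖ ^ 2 * K := by gcongr
      _ = 2 * ν * K * ‖x‖ ^ 2 := by ring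
  have hdiv : c / (2 * ν * K) ≤ ‖x‖ ^ (1 - p) := by
    rwa [div_le_iff₀ (by positivity), mul_comm]
  refine ⟨hν0, ?_⟩
  rw [one_div, Real.rpow_inv_le_iff_of_pos (by positivity) hx0.le (by linarith)]
  exact hdiv

end

theorem stmt5_general (L : ℕ) (p : ℝ) (hp0 : 0 < p) (hp1 : p < 1)
    (β : Fin (L + 1) → ℝ) (hβ : ∀ l, 0 < β l)
    (Yh : V L →ₗ[ℂ] V L)
    (αo : V L)
    (ct : ℝ) (hct : 0 < ct)
    (αs : V L) (ν : ℝ) (hν : 0 ≤ ν)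
    (hstat : ∀ l : Fin (L + 1),
      (p * β l * ‖αs l‖ ^ p) • αs l
        + (2 * ν * ‖αs l‖ ^ 2) • ((Yh αs - αo) l) = 0)
    (hbound : ‖Yh αs - αo‖ ≤ ct) :
    ∀ l : Fin (L + 1), αs l ≠ 0 →
      0 < ν ∧ (p * β l / (2 * ν * ct)) ^ (1 / (1 - p)) ≤ ‖αs l‖ := fun l hl =>
  pos_and_rpow_le_norm_of_stationary hp1 (mul_pos hp0 (hβ l)) hν hct hl
    ((PiLp.norm_apply_le _ l).trans hbound) (hstat l)

/-- lower bound on the norms of the nonzero groups of a scaled KKT point of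
the constrained problem, together with positivity of the multiplier. -/
theorem stmt5 (L : ℕ) (p : ℝ) (hp0 : 0 < p) (hp1 : p < 1)
    (β : Fin (L + 1) → ℝ) (hβ : ∀ l, 0 < β l)
    (Yh : V L →ₗ[ℂ] V L)
    (hsa : ∀ x y : V L, (inner ℂ (Yh x) y : ℂ) = inner ℂ x (Yh y))
    (hpd : ∀ α : V L, α ≠ 0 → 0 < (inner ℂ α (Yh α) : ℂ).re)
    (αo : V L) (c ϱ : ℝ)
    (g : V L → ℝ)
    (hg : ∀ α : V L, g α = (inner ℂ α (Yh α) : ℂ).re - 2 * (inner ℂ αo α : ℂ).re + c - ϱ)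
    (ct : ℝ) (hct : 0 < ct)
    (αs : V L) (ν : ℝ) (hν : 0 ≤ ν)
    (hstat : ∀ l : Fin (L + 1),
      (p * β l * ‖αs l‖ ^ p) • αs l
        + (2 * ν * ‖αs l‖ ^ 2) • ((Yh αs - αo) l) = 0)
    (hcomp : ν * g αs = 0) (hfeas : g αs ≤ 0)
    (hbound : ‖Yh αs - αo‖ ≤ ct) :
    ∀ l : Fin (L + 1), αs l ≠ 0 →
      0 < ν ∧ (p * β l / (2 * ν * ct)) ^ (1 / (1 - p)) ≤ ‖αs l‖ :=
  stmt5_general L p hp0 hp1 β hβ Yh αo ct hct αs ν hν hstat hbound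
end

section
/- (i) Let λ > 0 and let α* ∈ V be a scaled first-order stationary point of the penalty problem (there exists ξ ∈ ℝ such that p·β_l·‖α*_l‖^p·α*_l + 2λξ·‖α*_l‖²·(Ŷα* − α°)_l = 0 for every l ∈ {0,…,L}, where ξ = 0 if g(α*) < 0, ξ ∈ [0,1] if g(α*) = 0, and ξ = 1 if g(α*) > 0). If g(α*) ≤ 0, then α* is a scaled KKT point of the constrained problem (there exists ν ≥ 0 with p·β_l·‖α*_l‖^p·α*_l + 2ν·‖α*_l‖²·(Ŷα* − α°)_l = 0 for all l, ν·g(α*) = 0, and g(α*) ≤ 0). (ii) Conversely, if α* is a scaled KKT point with multiplier ν ≥ 0, then for every λ > 0 with λ ≥ ν, α* is a scaled first-order stationary point of the penalty problem with parameter λ. -/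
open Set

lemma kkt_multiplier_of_penalty_weight {s ξ lam : ℝ} (hlam : 0 < lam)
    (hneg : s < 0 → ξ = 0) (hzero : s = 0 → ξ ∈ Icc (0 : ℝ) 1) (hs : s ≤ 0) :
    0 ≤ lam * ξ ∧ lam * ξ * s = 0 := by
  rcases hs.lt_or_eq with hlt | rfl
  · simp [hneg hlt]
  · exact ⟨mul_nonneg hlam.le (hzero rfl).1, mul_zero _⟩

lemma penalty_weight_of_kkt_multiplier {s ν lam : ℝ} (hν : 0 ≤ ν) (hcomp : ν * s = 0)
    (hs : s ≤ 0) (hlam : 0 < lam) (hνlam : ν ≤ lam) :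
    (s < 0 → ν / lam = 0) ∧ (s = 0 → ν / lam ∈ Icc (0 : ℝ) 1) ∧ (0 < s → ν / lam = 1) := by
  refine ⟨fun hlt => ?_, fun _ => ⟨by positivity, div_le_one_of_le₀ hνlam hlam.le⟩,
    fun hpos => absurd hs hpos.not_ge⟩
  rw [(mul_eq_zero.mp hcomp).resolve_right hlt.ne, zero_div]

theorem stmt7_general (L : ℕ) (p : ℝ)
    (β : Fin (L + 1) → ℝ)
    (Yh : V L →ₗ[ℂ] V L)
    (αo : V L)
    (g : V L → ℝ)
    (αs : V L) :
    ((∀ lam : ℝ, 0 < lam →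
        (∃ ξ : ℝ,
          (g αs < 0 → ξ = 0) ∧ (g αs = 0 → ξ ∈ Set.Icc (0 : ℝ) 1) ∧ (0 < g αs → ξ = 1) ∧
          ∀ l : Fin (L + 1),
            (p * β l * ‖αs l‖ ^ p) • αs l
              + (2 * lam * ξ * ‖αs l‖ ^ 2) • ((Yh αs - αo) l) = 0) →
        g αs ≤ 0 →
        ∃ ν : ℝ, 0 ≤ ν ∧
          (∀ l : Fin (L + 1),
            (p * β l * ‖αs l‖ ^ p) • αs l
              + (2 * ν * ‖αs l‖ ^ 2) • ((Yh αs - αo) l) = 0) ∧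
          ν * g αs = 0 ∧ g αs ≤ 0)) ∧
    (∀ ν : ℝ, 0 ≤ ν →
        ((∀ l : Fin (L + 1),
            (p * β l * ‖αs l‖ ^ p) • αs l
              + (2 * ν * ‖αs l‖ ^ 2) • ((Yh αs - αo) l) = 0) ∧
          ν * g αs = 0 ∧ g αs ≤ 0) →
        ∀ lam : ℝ, 0 < lam → ν ≤ lam →
          ∃ ξ : ℝ,
            (g αs < 0 → ξ = 0) ∧ (g αs = 0 → ξ ∈ Set.Icc (0 : ℝ) 1) ∧ (0 < g αs → ξ = 1) ∧
            ∀ l : Fin (L + 1),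
              (p * β l * ‖αs l‖ ^ p) • αs l
                + (2 * lam * ξ * ‖αs l‖ ^ 2) • ((Yh αs - αo) l) = 0) := by
  constructor
  · rintro lam hlam ⟨ξ, hneg, hzero, -, hstat⟩ hs
    obtain ⟨hν, hcomp⟩ := kkt_multiplier_of_penalty_weight hlam hneg hzero hs
    refine ⟨lam * ξ, hν, fun l => ?_, hcomp, hs⟩
    rw [← mul_assoc]
    exact hstat l
  · rintro ν hν ⟨hstat, hcomp, hs⟩ lam hlam hνlam
    obtain ⟨hneg, hzero, hpos⟩ := penalty_weight_of_kkt_multiplier hν hcomp hs hlam hνlam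
    refine ⟨ν / lam, hneg, hzero, hpos, fun l => ?_⟩
    rw [mul_assoc 2, mul_div_cancel₀ ν hlam.ne']
    exact hstat l

/-- (i) a feasible scaled first-order stationary point of the penalty problem is
a scaled KKT point of the constrained problem; (ii) conversely, a scaled KKT point with
multiplier `ν` is a scaled first-order stationary point of the penalty problem whenever
`λ ≥ ν`. -/
theorem stmt7 (L : ℕ) (p : ℝ) (hp0 : 0 < p) (hp1 : p < 1)
    (β : Fin (L + 1) → ℝ) (hβ : ∀ l, 0 < β l)
    (Yh : V L →ₗ[ℂ] V L)
    (hsa : ∀ x y : V L, (inner ℂ (Yh x) y : ℂ) = inner ℂ x (Yh y))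
    (hpd : ∀ α : V L, α ≠ 0 → 0 < (inner ℂ α (Yh α) : ℂ).re)
    (αo : V L) (c ϱ : ℝ)
    (g : V L → ℝ)
    (hg : ∀ α : V L, g α = (inner ℂ α (Yh α) : ℂ).re - 2 * (inner ℂ αo α : ℂ).re + c - ϱ)
    (αs : V L) :
    ((∀ lam : ℝ, 0 < lam →
        (∃ ξ : ℝ,
          (g αs < 0 → ξ = 0) ∧ (g αs = 0 → ξ ∈ Set.Icc (0 : ℝ) 1) ∧ (0 < g αs → ξ = 1) ∧
          ∀ l : Fin (L + 1),
            (p * β l * ‖αs l‖ ^ p) • αs l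
              + (2 * lam * ξ * ‖αs l‖ ^ 2) • ((Yh αs - αo) l) = 0) →
        g αs ≤ 0 →
        ∃ ν : ℝ, 0 ≤ ν ∧
          (∀ l : Fin (L + 1),
            (p * β l * ‖αs l‖ ^ p) • αs l
              + (2 * ν * ‖αs l‖ ^ 2) • ((Yh αs - αo) l) = 0) ∧
          ν * g αs = 0 ∧ g αs ≤ 0)) ∧
    (∀ ν : ℝ, 0 ≤ ν →
        ((∀ l : Fin (L + 1),
            (p * β l * ‖αs l‖ ^ p) • αs l
              + (2 * ν * ‖αs l‖ ^ 2) • ((Yh αs - αo) l) = 0) ∧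
          ν * g αs = 0 ∧ g αs ≤ 0) →
        ∀ lam : ℝ, 0 < lam → ν ≤ lam →
          ∃ ξ : ℝ,
            (g αs < 0 → ξ = 0) ∧ (g αs = 0 → ξ ∈ Set.Icc (0 : ℝ) 1) ∧ (0 < g αs → ξ = 1) ∧
            ∀ l : Fin (L + 1),
              (p * β l * ‖αs l‖ ^ p) • αs l
                + (2 * lam * ξ * ‖αs l‖ ^ 2) • ((Yh αs - αo) l) = 0) :=
  stmt7_general L p β Yh αo g αs
end

section
/- Let 0 < p < 1, η > 1, ν > 0, and c̃ > 0. Define β_0 = 1 and β_l = η^l · l^p for all integers l ≥ 1. Let a : ℕ → ℝ satisfy a_l ≥ 0 for all l, suppose the series Σ_{l=0}^{∞} β_l · a_l^p converges, and suppose that a_l ≥ (p·β_l/(2νc̃))^{1/(1−p)} for every l with a_l ≠ 0. Then the set {l ∈ ℕ : a_l ≠ 0} is finite. -/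
/-!
Every nonzero term of the series is bounded below by the same positive constant: since `β_l ≥ 1`,
`β_l a_l^p ≥ β_l (p β_l / 2νc̃)^{p/(1-p)} ≥ (p / 2νc̃)^{p/(1-p)}`. The terms of a convergent
series tend to zero along the cofinite filter, so only finitely many of them reach that constant.
-/

open Filter

theorem Summable.finite_setOf_le {ι : Type*} {f : ι → ℝ} (hf : Summable f) {C : ℝ} (hC : 0 < C) :
    {i | C ≤ f i}.Finite := by
  simpa only [not_lt] using
    eventually_cofinite.mp (hf.tendsto_cofinite_zero.eventually_lt_const hC)

theorem one_le_pow_mul_natCast_rpow {η p : ℝ} (hη : 1 ≤ η) (hp : 0 ≤ p) {l : ℕ} (hl : 1 ≤ l) :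
    1 ≤ η ^ l * (l : ℝ) ^ p :=
  one_le_mul_of_one_le_of_one_le (one_le_pow₀ hη) (Real.one_le_rpow (by exact_mod_cast hl) hp)

theorem rpow_div_one_sub_le_mul_rpow {p c b x : ℝ} (hp0 : 0 ≤ p) (hp1 : p < 1) (hc : 0 ≤ c)
    (hb : 1 ≤ b) (hx : (c * b) ^ (1 / (1 - p)) ≤ x) : c ^ (p / (1 - p)) ≤ b * x ^ p := by
  have h1p : 0 < 1 - p := by linarith
  have hb0 : 0 ≤ b := zero_le_one.trans hb
  have hexp : 1 / (1 - p) = 1 + p / (1 - p) := by field_simp; ring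
  calc c ^ (p / (1 - p)) ≤ c ^ (p / (1 - p)) * b ^ (1 / (1 - p)) :=
        le_mul_of_one_le_right (by positivity) (Real.one_le_rpow hb (by positivity))
    _ = b * ((c * b) ^ (1 / (1 - p))) ^ p := by
        rw [← Real.rpow_mul (by positivity), one_div_mul_eq_div, Real.mul_rpow hc hb0, hexp,
          Real.rpow_add' hb0 (by positivity), Real.rpow_one]
        ring
    _ ≤ b * x ^ p := by gcongr

theorem stmt8_general (p η ν ct : ℝ) (hp0 : 0 < p) (hp1 : p < 1) (hη : 1 < η)
    (hν : 0 < ν) (hct : 0 < ct)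
    (β : ℕ → ℝ) (hβ0 : β 0 = 1)
    (hβ : ∀ l : ℕ, 1 ≤ l → β l = η ^ l * (l : ℝ) ^ p)
    (a : ℕ → ℝ)
    (hsum : Summable (fun l => β l * a l ^ p))
    (hlow : ∀ l, a l ≠ 0 → (p * β l / (2 * ν * ct)) ^ (1 / (1 - p)) ≤ a l) :
    {l : ℕ | a l ≠ 0}.Finite := by
  have hβ1 : ∀ l, 1 ≤ β l := by
    intro l
    rcases Nat.eq_zero_or_pos l with rfl | hl
    · exact hβ0.ge
    · exact hβ l hl ▸ one_le_pow_mul_natCast_rpow hη.le hp0.le hl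
  refine (hsum.finite_setOf_le (C := (p / (2 * ν * ct)) ^ (p / (1 - p))) (by positivity)).subset ?_
  intro l hl
  refine rpow_div_one_sub_le_mul_rpow hp0.le hp1 (by positivity) (hβ1 l) ?_
  simpa only [mul_div_right_comm] using hlow l hl

/-- if the weighted `ℓ^p` sum of a nonnegative sequence converges and its nonzero
entries obey the lower bound `(p·β_l/(2νc̃))^{1/(1−p)}`, then only finitely many entries are
nonzero. -/
theorem stmt8 (p η ν ct : ℝ) (hp0 : 0 < p) (hp1 : p < 1) (hη : 1 < η)
    (hν : 0 < ν) (hct : 0 < ct)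
    (β : ℕ → ℝ) (hβ0 : β 0 = 1)
    (hβ : ∀ l : ℕ, 1 ≤ l → β l = η ^ l * (l : ℝ) ^ p)
    (a : ℕ → ℝ) (ha : ∀ l, 0 ≤ a l)
    (hsum : Summable (fun l => β l * a l ^ p))
    (hlow : ∀ l, a l ≠ 0 → (p * β l / (2 * ν * ct)) ^ (1 / (1 - p)) ≤ a l) :
    {l : ℕ | a l ≠ 0}.Finite :=
  stmt8_general p η ν ct hp0 hp1 hη hν hct β hβ0 hβ a hsum hlow
end

section
/- Let 0 < p < 1 and η > 1, and let a : ℕ → ℝ satisfy a_l ≥ 0 for all l. If the series Σ_{l=0}^{∞} η^l · l^p · a_l^p converges (i.e., the sequence l ↦ η^l · l^p · a_l^p is summable), then the series Σ_{l=0}^{∞} η^l · l · a_l converges (i.e., the sequence l ↦ η^l · l · a_l is summable). -/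
/-! Put `x_l = η^l · l · a_l`. Since `η^l ≥ 1` and `p ≤ 1`, we have `x_l^p ≤ η^l · l^p · a_l^p`,
so `l ↦ x_l^p` is summable. Its terms tend to `0`, hence eventually `x_l ≤ 1`, where
`x_l ≤ x_l^p`: so `l ↦ x_l` is summable as well. -/

namespace Real

variable {p : ℝ}

theorem summable_of_summable_rpow {ι : Type*} {f : ι → ℝ} (hf : ∀ i, 0 ≤ f i) (hp0 : 0 < p)
    (hp1 : p ≤ 1) (h : Summable fun i => f i ^ p) : Summable f := by
  refine h.of_norm_bounded_eventually ?_
  filter_upwards [h.tendsto_cofinite_zero.eventually (gt_mem_nhds one_pos)] with i hi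
  rw [norm_of_nonneg (hf i)]
  exact self_le_rpow_of_le_one (hf i) ((rpow_lt_one_iff' (hf i) hp0).mp hi).le hp1

theorem mul_rpow_le_mul_rpow {c x : ℝ} (hc : 1 ≤ c) (hx : 0 ≤ x) (hp1 : p ≤ 1) :
    (c * x) ^ p ≤ c * x ^ p := by
  rw [mul_rpow (zero_le_one.trans hc) hx]
  gcongr
  exact rpow_le_self_of_one_le hc hp1

end Real

/-- if `l ↦ η^l · l^p · a_l^p` is summable for a nonnegative sequence `a`, then
`l ↦ η^l · l · a_l` is summable. -/
theorem stmt9 (p η : ℝ) (hp0 : 0 < p) (hp1 : p < 1) (hη : 1 < η)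
    (a : ℕ → ℝ) (ha : ∀ l, 0 ≤ a l)
    (hsum : Summable (fun l : ℕ => η ^ l * (l : ℝ) ^ p * a l ^ p)) :
    Summable (fun l : ℕ => η ^ l * (l : ℝ) * a l) := by
  have hx : ∀ l : ℕ, 0 ≤ η ^ l * (l : ℝ) * a l := fun l => by
    have := ha l
    positivity
  have hle : ∀ l : ℕ, (η ^ l * (l : ℝ) * a l) ^ p ≤ η ^ l * (l : ℝ) ^ p * a l ^ p := fun l => by
    rw [mul_assoc, mul_assoc, ← Real.mul_rpow l.cast_nonneg (ha l)]
    exact Real.mul_rpow_le_mul_rpow (one_le_pow₀ hη.le) (mul_nonneg l.cast_nonneg (ha l)) hp1.le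
  exact Real.summable_of_summable_rpow hx hp0 hp1.le
    (hsum.of_nonneg_of_le (fun l => Real.rpow_nonneg (hx l) p) hle)
end

section
/- The function ψ_{λ,μ} is differentiable on ℝ with derivative ψ'_{λ,μ}(s) = λ · min(max(s/μ, 0), 1) at every s ∈ ℝ, and this derivative is Lipschitz continuous with constant λ/μ: for all s₁, s₂ ∈ ℝ, |ψ'_{λ,μ}(s₁) − ψ'_{λ,μ}(s₂)| ≤ (λ/μ)·|s₁ − s₂|. -/
/-!
The supremum defining `ψ_{λ,μ}(s) / λ` is attained at `c(s) = min (max (s / μ) 0) 1`, the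
projection of `s / μ` onto `[0, 1]`. Since `c(s)` is a feasible point for every other `s'`, the map
`s ↦ λ c(s)` is a subgradient of `ψ_{λ,μ}` everywhere (envelope theorem), and a function with a
continuous subgradient is differentiable with that derivative. The Lipschitz bound holds because
the projection onto `[0, 1]` is `1`-Lipschitz.
-/

open Filter Topology Asymptotics

theorem hasDerivAt_of_subgradient_of_continuousAt {f g : ℝ → ℝ} {x : ℝ}
    (hsub : ∀ y z, f y + (z - y) * g y ≤ f z) (hg : ContinuousAt g x) :
    HasDerivAt f (g x) x := by
  rw [hasDerivAt_iff_isLittleO]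
  -- the subgradient inequalities at `x` and at `y` squeeze the remainder
  have hbound : ∀ y, ‖f y - f x - (y - x) • g x‖ ≤ ‖(y - x) * (g y - g x)‖ := by
    intro y
    have hlower : 0 ≤ f y - f x - (y - x) * g x := by linarith [hsub x y]
    have hupper : f y - f x - (y - x) * g x ≤ (y - x) * (g y - g x) := by
      linarith [hsub y x]
    rw [smul_eq_mul, Real.norm_of_nonneg hlower]
    exact hupper.trans (le_abs_self _)
  have hsmall : (fun y => (y - x) * (g y - g x)) =o[𝓝 x] fun y => y - x := by
    simpa using (isBigO_refl (fun y => y - x) (𝓝 x)).mul_isLittleO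
      ((isLittleO_one_iff ℝ).2 (tendsto_sub_nhds_zero_iff.2 hg))
  exact (IsBigO.of_bound' (Eventually.of_forall hbound)).trans_isLittleO hsmall

theorem abs_clamp_sub_clamp_le (a b : ℝ) :
    |min (max a 0) 1 - min (max b 0) 1| ≤ |a - b| := by
  calc |min (max a 0) 1 - min (max b 0) 1| ≤ |max a 0 - max b 0| := by
        simpa using abs_min_sub_min_le_max (max a 0) 1 (max b 0) 1
    _ ≤ |a - b| := abs_max_sub_max_le_abs a b 0

theorem isGreatest_image_Icc_quadratic {μ : ℝ} (hμ : 0 < μ) (s : ℝ) :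
    IsGreatest ((fun t : ℝ => s * t - μ / 2 * t ^ 2) '' Set.Icc 0 1)
      (s * min (max (s / μ) 0) 1 - μ / 2 * min (max (s / μ) 0) 1 ^ 2) := by
  set c := min (max (s / μ) 0) 1 with hc
  refine ⟨⟨c, ⟨le_min (le_max_right _ _) zero_le_one, min_le_right _ _⟩, rfl⟩, ?_⟩
  rintro _ ⟨t, ⟨ht₀, ht₁⟩, rfl⟩
  -- variational inequality of the projection `c` of `s / μ` onto `[0, 1]`
  have hproj : (t - c) * (s - μ * c) ≤ 0 := by
    rcases le_total s 0 with hs | hs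
    · have : c = 0 := by simp [hc, div_nonpos_of_nonpos_of_nonneg hs hμ.le]
      rw [this]; nlinarith
    rcases le_total s μ with hsμ | hsμ
    · have : μ * c = s := by
        rw [hc, max_eq_left (div_nonneg hs hμ.le), min_eq_left ((div_le_one hμ).2 hsμ)]
        field_simp
      rw [this]; simp
    · have : c = 1 := by simp [hc, (one_le_div hμ).2 hsμ]
      rw [this]; nlinarith
  nlinarith [hproj, mul_nonneg hμ.le (sq_nonneg (t - c))]

/-- the smoothing function `ψ_{λ,μ}` is differentiable with derivative
`s ↦ λ·min(max(s/μ,0),1)`, and this derivative is Lipschitz with constant `λ/μ`. -/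
theorem stmt12 (lam μ : ℝ) (hlam : 0 < lam) (hμ : 0 < μ)
    (ψ : ℝ → ℝ)
    (hψ : ∀ s : ℝ, ψ s = lam * sSup ((fun t : ℝ => s * t - μ / 2 * t ^ 2) '' Set.Icc (0 : ℝ) 1)) :
    (∀ s : ℝ, HasDerivAt ψ (lam * min (max (s / μ) 0) 1) s) ∧
    (∀ s₁ s₂ : ℝ,
      |lam * min (max (s₁ / μ) 0) 1 - lam * min (max (s₂ / μ) 0) 1| ≤ lam / μ * |s₁ - s₂|) := by
  set c : ℝ → ℝ := fun s => min (max (s / μ) 0) 1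
  have hsub : ∀ s s', ψ s + (s' - s) * (lam * c s) ≤ ψ s' := by
    intro s s'
    have hmem : c s ∈ Set.Icc (0 : ℝ) 1 :=
      ⟨le_min (le_max_right _ _) zero_le_one, min_le_right _ _⟩
    have hle := (isGreatest_image_Icc_quadratic hμ s').2 ⟨c s, hmem, rfl⟩
    rw [hψ, hψ, (isGreatest_image_Icc_quadratic hμ s).csSup_eq,
      (isGreatest_image_Icc_quadratic hμ s').csSup_eq]
    linear_combination mul_le_mul_of_nonneg_left hle hlam.le
  have hcont : Continuous fun s => lam * c s := by fun_prop
  refine ⟨fun s => hasDerivAt_of_subgradient_of_continuousAt hsub hcont.continuousAt,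
    fun s₁ s₂ => ?_⟩
  calc |lam * c s₁ - lam * c s₂| = lam * |c s₁ - c s₂| := by
        rw [← mul_sub, abs_mul, abs_of_pos hlam]
    _ ≤ lam * |s₁ / μ - s₂ / μ| :=
        mul_le_mul_of_nonneg_left (abs_clamp_sub_clamp_le _ _) hlam.le
    _ = lam / μ * |s₁ - s₂| := by
        rw [← sub_div, abs_div, abs_of_pos hμ]; ring
end

section
/- Let (α^k)_{k ∈ ℕ} be a sequence in V, let (λ_k), (μ_k), (ε_k) be sequences of positive reals with λ_k → ∞, μ_k → 0, and ε_k → 0, and let α̃ ∈ V. Suppose that for every k, Φ(α^{k+1}) + f_{λ_k,μ_k}(α^{k+1}) ≤ Φ(α̃), and that for every k ≥ 1 and every l ∈ {0,…,L}, ‖ p·β_l·‖α^k_l‖^p·α^k_l + 2·t_k·‖α^k_l‖²·(Ŷα^k − α°)_l ‖ ≤ ε_{k−1}, where t_k = λ_k · min(max(g(α^k)/μ_k, 0), 1). Let α* be the limit of a convergent subsequence of (α^k), and assume there exists l ∈ {0,…,L} with α*_l ≠ 0 and (Ŷα* − α°)_l ≠ 0. Then α* is a scaled KKT point of the constrained problem: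 there exists ν ≥ 0 such that p·β_l·‖α*_l‖^p·α*_l + 2ν·‖α*_l‖²·(Ŷα* − α°)_l = 0 for every l ∈ {0,…,L}, ν·g(α*) = 0, and g(α*) ≤ 0. -/
/-!
Along the convergent subsequence the residuals `a_k + t_k • w_k` of the stationarity condition
tend to `0`, while `a_k → a*` and `w_k → w*` groupwise. Since `w*` is nonzero in some group,
evaluating a dual vector of that group on `t_k • w_k` shows that the multipliers `t_k ≥ 0`
converge to some `ν`, and the limit of the residuals is stationarity with multiplier `ν`.
Feasibility holds because otherwise the penalty `λ_k (g(α^k) - μ_k / 2)`, which is bounded by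
the descent inequality, would tend to `∞`; complementary slackness holds because `t_k = 0` as
soon as `g(α^k) < 0`.
-/

open Filter

open Topology

theorem exists_tendsto_of_tendsto_smul {ι E : Type*} [NormedAddCommGroup E] [NormedSpace ℝ E]
    {l : Filter ι} {t : ι → ℝ} {w : ι → E} {w₀ b : E} (hw : Tendsto w l (𝓝 w₀)) (hw₀ : w₀ ≠ 0)
    (htw : Tendsto (fun i => t i • w i) l (𝓝 b)) : ∃ ν, Tendsto t l (𝓝 ν) := by
  obtain ⟨φ, -, hφw₀⟩ := exists_dual_vector'' ℝ w₀
  have hw₀' : ‖w₀‖ ≠ 0 := norm_ne_zero_iff.2 hw₀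
  have hden : Tendsto (fun i => φ (w i)) l (𝓝 ‖w₀‖) := by
    simpa [Function.comp_def, hφw₀] using (φ.continuous.tendsto w₀).comp hw
  have hnum : Tendsto (fun i => t i * φ (w i)) l (𝓝 (φ b)) := by
    simpa only [Function.comp_def, map_smul, smul_eq_mul] using (φ.continuous.tendsto b).comp htw
  refine ⟨φ b / ‖w₀‖, (hnum.div hden hw₀').congr' ?_⟩
  filter_upwards [hden.eventually_ne hw₀'] with i hi
  exact mul_div_cancel_right₀ _ hi

theorem exists_tendsto_forall_add_smul_eq_zero {ι κ : Type*} {E : κ → Type*}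
    [∀ j, NormedAddCommGroup (E j)] [∀ j, NormedSpace ℝ (E j)] {l : Filter ι} [l.NeBot]
    {t : ι → ℝ} {a w : ι → ∀ j, E j} {a₀ w₀ : ∀ j, E j} {j₀ : κ}
    (ha : ∀ j, Tendsto (fun i => a i j) l (𝓝 (a₀ j)))
    (hw : ∀ j, Tendsto (fun i => w i j) l (𝓝 (w₀ j)))
    (hres : ∀ j, Tendsto (fun i => a i j + t i • w i j) l (𝓝 0)) (hw₀ : w₀ j₀ ≠ 0) :
    ∃ ν, Tendsto t l (𝓝 ν) ∧ ∀ j, a₀ j + ν • w₀ j = 0 := by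
  obtain ⟨ν, hν⟩ := exists_tendsto_of_tendsto_smul (hw j₀) hw₀ (by
    simpa using (hres j₀).sub (ha j₀))
  exact ⟨ν, hν, fun j => tendsto_nhds_unique ((ha j).add (hν.smul (hw j))) (hres j)⟩

theorem nonpos_of_penalty_le {ι : Type*} {l : Filter ι} [l.NeBot] {G lam mu : ι → ℝ} {G₀ C : ℝ}
    (hG : Tendsto G l (𝓝 G₀)) (hlam : Tendsto lam l atTop) (hmu : Tendsto mu l (𝓝 0))
    (hle : ∀ᶠ i in l, mu i ≤ G i → lam i * G i - lam i * mu i / 2 ≤ C) : G₀ ≤ 0 := by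
  by_contra! hG₀
  have hgap : Tendsto (fun i => G i - mu i / 2) l (𝓝 G₀) := by
    simpa using hG.sub (hmu.div_const 2)
  have hlarge : ∀ᶠ i in l, C < lam i * (G i - mu i / 2) :=
    (hlam.atTop_mul_pos hG₀ hgap).eventually_gt_atTop C
  have hmuG : ∀ᶠ i in l, mu i ≤ G i := by
    filter_upwards [hmu.eventually (gt_mem_nhds (half_pos hG₀)),
      hG.eventually (lt_mem_nhds (half_lt_self hG₀))] with i h₁ h₂
    linarith
  obtain ⟨i, hi, hmuGi, hlargei⟩ := (hle.and (hmuG.and hlarge)).exists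
  linarith [hi hmuGi]

/-- The derivative `∂ₛ` of the smoothed penalty; `t_k = penaltyWeight λ_k μ_k (g α^k)`. -/
noncomputable def penaltyWeight (lam mu s : ℝ) : ℝ := lam * min (max (s / mu) 0) 1

theorem penaltyWeight_nonneg {lam : ℝ} (hlam : 0 ≤ lam) (mu s : ℝ) :
    0 ≤ penaltyWeight lam mu s :=
  mul_nonneg hlam (le_min (le_max_right _ _) zero_le_one)

theorem penaltyWeight_of_nonpos (lam : ℝ) {mu s : ℝ} (hmu : 0 ≤ mu) (hs : s ≤ 0) :
    penaltyWeight lam mu s = 0 := by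
  simp [penaltyWeight, div_nonpos_of_nonpos_of_nonneg hs hmu]

theorem mul_eq_zero_of_tendsto_penaltyWeight {ι : Type*} {l : Filter ι} [l.NeBot]
    {lam mu G : ι → ℝ} {G₀ ν : ℝ} (hmu : ∀ i, 0 ≤ mu i) (hG : Tendsto G l (𝓝 G₀))
    (hG₀ : G₀ ≤ 0) (hν : Tendsto (fun i => penaltyWeight (lam i) (mu i) (G i)) l (𝓝 ν)) :
    ν * G₀ = 0 := by
  rcases hG₀.lt_or_eq with hneg | rfl
  · suffices ν = 0 by simp [this]
    refine tendsto_nhds_unique hν (tendsto_const_nhds.congr' ?_)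
    filter_upwards [hG.eventually (gt_mem_nhds hneg)] with i hi
    exact (penaltyWeight_of_nonpos _ (hmu i) hi.le).symm
  · exact mul_zero ν

theorem stmt16_general (L : ℕ) (p : ℝ) (hp0 : 0 < p)
    (β : Fin (L + 1) → ℝ) (hβ : ∀ l, 0 < β l)
    (Φ : V L → ℝ)
    (hΦ : ∀ α : V L, Φ α = ∑ l : Fin (L + 1), β l * ‖α l‖ ^ p)
    (Yh : V L →ₗ[ℂ] V L)
    (αo : V L) (c ϱ : ℝ)
    (g : V L → ℝ)
    (hg : ∀ α : V L, g α = (inner ℂ α (Yh α) : ℂ).re - 2 * (inner ℂ αo α : ℂ).re + c - ϱ)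
    (f : ℝ → ℝ → V L → ℝ)
    (hftop : ∀ lam mu : ℝ, ∀ α : V L, mu ≤ g α →
      f lam mu α = lam * g α - lam * mu / 2)
    (αseq : ℕ → V L) (lamseq museq εseq : ℕ → ℝ)
    (hlam : ∀ k, 0 < lamseq k) (hmu : ∀ k, 0 < museq k)
    (hlamtop : Tendsto lamseq atTop atTop)
    (hmu0 : Tendsto museq atTop (nhds 0))
    (hε0 : Tendsto εseq atTop (nhds 0))
    (αt : V L)
    (hdesc : ∀ k : ℕ, Φ (αseq (k + 1)) + f (lamseq k) (museq k) (αseq (k + 1)) ≤ Φ αt)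
    (hstep : ∀ k : ℕ, 1 ≤ k → ∀ l : Fin (L + 1),
      ‖(p * β l * ‖αseq k l‖ ^ p) • αseq k l
        + (2 * (lamseq k * min (max (g (αseq k) / museq k) 0) 1) * ‖αseq k l‖ ^ 2) •
            ((Yh (αseq k) - αo) l)‖ ≤ εseq (k - 1))
    (αstar : V L)
    (hconv : ∃ φ : ℕ → ℕ, StrictMono φ ∧ Tendsto (αseq ∘ φ) atTop (nhds αstar))
    (hnz : ∃ l : Fin (L + 1), αstar l ≠ 0 ∧ (Yh αstar - αo) l ≠ 0) :
    ∃ ν : ℝ, 0 ≤ ν ∧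
      (∀ l : Fin (L + 1),
        (p * β l * ‖αstar l‖ ^ p) • αstar l
          + (2 * ν * ‖αstar l‖ ^ 2) • ((Yh αstar - αo) l) = 0) ∧
      ν * g αstar = 0 ∧ g αstar ≤ 0 := by
  obtain ⟨φ, hφ, hα⟩ := hconv
  obtain ⟨l₀, hα₀, hr₀⟩ := hnz
  -- the filter of the subsequence, finer than `atTop`, so that no reindexing by `φ` is needed
  set F := map φ atTop
  have hF : F ≤ atTop := hφ.tendsto_atTop
  have hα : Tendsto αseq F (𝓝 αstar) := hα
  have hpred : Tendsto (· - 1) F atTop := (tendsto_sub_atTop_nat 1).comp hF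
  have hYh : Continuous Yh := Yh.continuous_of_finiteDimensional
  have hgα : Tendsto (g ∘ αseq) F (𝓝 (g αstar)) := by
    refine (Continuous.tendsto ?_ _).comp hα
    rw [funext hg]
    fun_prop
  have hαl : ∀ l, Tendsto (fun k => αseq k l) F (𝓝 (αstar l)) := fun l =>
    ((PiLp.continuous_apply 2 _ l).tendsto _).comp hα
  have hrl : ∀ l, Tendsto (fun k => (Yh (αseq k) - αo) l) F (𝓝 ((Yh αstar - αo) l)) := fun l =>
    (((PiLp.continuous_apply 2 _ l).comp (hYh.sub continuous_const)).tendsto _).comp hα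
  obtain ⟨ν, hν, hstat⟩ := exists_tendsto_forall_add_smul_eq_zero (j₀ := l₀)
    (t := fun k => penaltyWeight (lamseq k) (museq k) (g (αseq k)))
    (a := fun k l => (p * β l * ‖αseq k l‖ ^ p) • αseq k l)
    (w := fun k l => (2 * ‖αseq k l‖ ^ 2) • (Yh (αseq k) - αo) l)
    (fun l => (tendsto_const_nhds.mul ((hαl l).norm.rpow_const (Or.inr hp0.le))).smul (hαl l))
    (fun l => (tendsto_const_nhds.mul ((hαl l).norm.pow 2)).smul (hrl l))
    (fun l => by
      rw [tendsto_zero_iff_norm_tendsto_zero]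
      refine squeeze_zero' (.of_forall fun _ => norm_nonneg _) ?_ (hε0.comp hpred)
      filter_upwards [hF (eventually_ge_atTop 1)] with k hk
      rw [smul_smul, mul_left_comm, ← mul_assoc]
      exact hstep k hk l)
    (smul_ne_zero (by positivity) hr₀)
  have hΦ0 : ∀ α, 0 ≤ Φ α := fun α => (hΦ α).symm ▸
    Finset.sum_nonneg fun l _ => mul_nonneg (hβ l).le (Real.rpow_nonneg (norm_nonneg _) p)
  have hfeas : g αstar ≤ 0 := by
    refine nonpos_of_penalty_le (C := Φ αt) hgα (hlamtop.comp hpred) (hmu0.comp hpred) ?_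
    filter_upwards [hF (eventually_ge_atTop 1)] with k hk hmuk
    dsimp only [Function.comp_apply] at hmuk ⊢
    have hdesck := hdesc (k - 1)
    rw [Nat.sub_add_cancel hk, hftop _ _ _ hmuk] at hdesck
    linarith [hΦ0 (αseq k)]
  refine ⟨ν, ge_of_tendsto' hν fun k => penaltyWeight_nonneg (hlam k).le _ _, fun l => ?_,
    mul_eq_zero_of_tendsto_penaltyWeight (fun k => (hmu k).le) hgα hfeas hν,
    hfeas⟩
  rw [mul_comm 2 ν, mul_assoc ν, ← smul_smul ν]
  exact hstat l

/-- every accumulation point of the iterates of the smoothing penalty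
algorithm at which some group is nonzero with nonzero residual is a scaled KKT point of the
constrained problem. -/
theorem stmt16 (L : ℕ) (p : ℝ) (hp0 : 0 < p) (hp1 : p < 1)
    (β : Fin (L + 1) → ℝ) (hβ : ∀ l, 0 < β l)
    (Φ : V L → ℝ)
    (hΦ : ∀ α : V L, Φ α = ∑ l : Fin (L + 1), β l * ‖α l‖ ^ p)
    (Yh : V L →ₗ[ℂ] V L)
    (hsa : ∀ x y : V L, (inner ℂ (Yh x) y : ℂ) = inner ℂ x (Yh y))
    (hpd : ∀ α : V L, α ≠ 0 → 0 < (inner ℂ α (Yh α) : ℂ).re)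
    (αo : V L) (c ϱ : ℝ)
    (g : V L → ℝ)
    (hg : ∀ α : V L, g α = (inner ℂ α (Yh α) : ℂ).re - 2 * (inner ℂ αo α : ℂ).re + c - ϱ)
    (f : ℝ → ℝ → V L → ℝ)
    (hf0 : ∀ lam mu : ℝ, ∀ α : V L, g α ≤ 0 → f lam mu α = 0)
    (hfmid : ∀ lam mu : ℝ, ∀ α : V L, 0 ≤ g α → g α ≤ mu →
      f lam mu α = lam * g α ^ 2 / (2 * mu))
    (hftop : ∀ lam mu : ℝ, ∀ α : V L, mu ≤ g α →
      f lam mu α = lam * g α - lam * mu / 2)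
    (αseq : ℕ → V L) (lamseq museq εseq : ℕ → ℝ)
    (hlam : ∀ k, 0 < lamseq k) (hmu : ∀ k, 0 < museq k) (hε : ∀ k, 0 < εseq k)
    (hlamtop : Tendsto lamseq atTop atTop)
    (hmu0 : Tendsto museq atTop (nhds 0))
    (hε0 : Tendsto εseq atTop (nhds 0))
    (αt : V L)
    (hdesc : ∀ k : ℕ, Φ (αseq (k + 1)) + f (lamseq k) (museq k) (αseq (k + 1)) ≤ Φ αt)
    (hstep : ∀ k : ℕ, 1 ≤ k → ∀ l : Fin (L + 1),
      ‖(p * β l * ‖αseq k l‖ ^ p) • αseq k l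
        + (2 * (lamseq k * min (max (g (αseq k) / museq k) 0) 1) * ‖αseq k l‖ ^ 2) •
            ((Yh (αseq k) - αo) l)‖ ≤ εseq (k - 1))
    (αstar : V L)
    (hconv : ∃ φ : ℕ → ℕ, StrictMono φ ∧ Tendsto (αseq ∘ φ) atTop (nhds αstar))
    (hnz : ∃ l : Fin (L + 1), αstar l ≠ 0 ∧ (Yh αstar - αo) l ≠ 0) :
    ∃ ν : ℝ, 0 ≤ ν ∧
      (∀ l : Fin (L + 1),
        (p * β l * ‖αstar l‖ ^ p) • αstar l
          + (2 * ν * ‖αstar l‖ ^ 2) • ((Yh αstar - αo) l) = 0) ∧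
      ν * g αstar = 0 ∧ g αstar ≤ 0 :=
  stmt16_general L p hp0 β hβ Φ hΦ Yh αo c ϱ g hg f hftop αseq lamseq museq εseq hlam hmu hlamtop
    hmu0 hε0 αt hdesc hstep αstar hconv hnz
end
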